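/- Suppose for every pair α_0 < α_1 a solution of an abstract ODE exists on [0, (α_1−α_0)/τ) with a fixed constant τ > 0, taking values in K_{α_1}, and solutions agree on overlapping time intervals; if moreover the solution at time t belongs to K_{α_0 + ct} for a constant c ≥ 0 with c < (α_1−α_0)/((α_1−α_0)/τ) appropriately, then by iterating the local construction the solution extends uniquely to all t ∈ [0, ∞), with k_t ∈ K_{α_0 + ct}. -/
import Mathlib


/-- Abstract continuation lemma in an increasing scale of spaces
`(K_α)`. `Sol k a b` means "`k` solves the abstract ODE on `[a,b]` (within the scale)".
Given: local solvability on intervals of a uniform length `τ > 0` starting from any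
time `a ≥ 0` and any datum in `K_{α₀+ca}`, with values in `K_{α₀+ct}`; uniqueness of
solutions with the same initial value; locality and concatenation of the solution
predicate. Then the solution extends uniquely to all `t ∈ [0,∞)` with
`k_t ∈ K_{α₀+ct}`. -/
theorem stmt11 {V : Type*} (K : ℝ → Set V)
    (Kmono : ∀ ⦃α α' : ℝ⦄, α ≤ α' → K α ⊆ K α')
    (Sol : (ℝ → V) → ℝ → ℝ → Prop)
    (τ : ℝ) (hτ : 0 < τ) (c : ℝ) (hc : 0 ≤ c) (α₀ : ℝ)
    (hrestrict : ∀ k a b a' b', Sol k a b → a ≤ a' → a' ≤ b' → b' ≤ b → Sol k a' b')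
    (hlocal_pred : ∀ k k' a b, Sol k a b → (∀ t ∈ Set.Icc a b, k' t = k t) → Sol k' a b)
    (hconcat : ∀ k a b b', a ≤ b → b ≤ b' → Sol k a b → Sol k b b' → Sol k a b')
    (hexists : ∀ a ≥ (0 : ℝ), ∀ v ∈ K (α₀ + c * a), ∃ k : ℝ → V,
      Sol k a (a + τ) ∧ k a = v ∧ ∀ t ∈ Set.Icc a (a + τ), k t ∈ K (α₀ + c * t))
    (huniq : ∀ k₁ k₂ a b, Sol k₁ a b → Sol k₂ a b → k₁ a = k₂ a →
      ∀ t ∈ Set.Icc a b, k₁ t = k₂ t) :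
    ∀ v ∈ K α₀, ∃ k : ℝ → V,
      k 0 = v ∧
      (∀ t ≥ (0 : ℝ), k t ∈ K (α₀ + c * t)) ∧
      (∀ b ≥ (0 : ℝ), Sol k 0 b) ∧
      (∀ k' : ℝ → V, k' 0 = v → (∀ b ≥ (0 : ℝ), Sol k' 0 b) →
        ∀ t ≥ (0 : ℝ), k' t = k t) := by

  intro v hv
  -- Step 1: solutions on [0, n*τ] for each n
  have key : ∀ n : ℕ, ∃ k : ℝ → V, Sol k 0 ((n : ℝ) * τ) ∧ k 0 = v ∧
      ∀ t ∈ Set.Icc (0:ℝ) ((n : ℝ) * τ), k t ∈ K (α₀ + c * t) := by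
    intro n
    induction n with
    | zero =>
      obtain ⟨k, hk, hk0, hmem⟩ := hexists 0 le_rfl v (by simpa using hv)
      refine ⟨k, ?_, hk0, ?_⟩
      · simpa using hrestrict k 0 (0 + τ) 0 0 hk le_rfl le_rfl (by linarith)
      · intro t ht
        simp only [Nat.cast_zero, zero_mul, Set.mem_Icc] at ht
        have : t = 0 := le_antisymm ht.2 ht.1
        subst this
        exact hmem 0 ⟨le_rfl, by linarith⟩
    | succ n ih =>
      obtain ⟨g, hg, hg0, hgmem⟩ := ih
      have hnτ : (0:ℝ) ≤ (n:ℝ) * τ := by positivity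
      have hvn : g ((n:ℝ) * τ) ∈ K (α₀ + c * ((n:ℝ) * τ)) := hgmem _ ⟨hnτ, le_rfl⟩
      obtain ⟨h, hh, hhn, hhmem⟩ := hexists ((n:ℝ) * τ) hnτ _ hvn
      set k : ℝ → V := fun t => if t ≤ (n:ℝ) * τ then g t else h t with hkdef
      have hk1 : Sol k 0 ((n:ℝ) * τ) :=
        hlocal_pred g k 0 _ hg (fun t ht => if_pos ht.2)
      have hk2 : Sol k ((n:ℝ) * τ) ((n:ℝ) * τ + τ) := by
        refine hlocal_pred h k _ _ hh (fun t ht => ?_)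
        by_cases hle : t ≤ (n:ℝ) * τ
        · have ht' : t = (n:ℝ) * τ := le_antisymm hle ht.1
          subst ht'
          simp only [hkdef, if_pos le_rfl]
          exact hhn.symm
        · simp [hkdef, hle]
      have succτ : ((n + 1 : ℕ) : ℝ) * τ = (n:ℝ) * τ + τ := by push_cast; ring
      refine ⟨k, ?_, ?_, ?_⟩
      · rw [succτ]
        exact hconcat k 0 ((n:ℝ) * τ) _ hnτ (by linarith) hk1 hk2
      · show k 0 = v
        simp only [hkdef, if_pos hnτ]
        exact hg0
      · intro t ht
        rw [succτ] at ht
        by_cases hle : t ≤ (n:ℝ) * τ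
        · simpa [hkdef, hle] using hgmem t ⟨ht.1, hle⟩
        · simp only [hkdef, if_neg hle]
          exact hhmem t ⟨(not_le.mp hle).le, ht.2⟩
  choose g hgSol hg0 hgmem using key
  -- consistency
  have hcons : ∀ m n : ℕ, m ≤ n → ∀ t ∈ Set.Icc (0:ℝ) ((m:ℝ) * τ), g m t = g n t := by
    intro m n hmn t ht
    have hmτ : (m:ℝ) * τ ≤ (n:ℝ) * τ :=
      mul_le_mul_of_nonneg_right (by exact_mod_cast hmn) hτ.le
    have hres : Sol (g n) 0 ((m:ℝ) * τ) :=
      hrestrict _ 0 ((n:ℝ) * τ) 0 ((m:ℝ) * τ) (hgSol n) le_rfl (by positivity) hmτ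
    exact huniq (g m) (g n) 0 ((m:ℝ) * τ) (hgSol m) hres ((hg0 m).trans (hg0 n).symm) t ht
  have hle_ceil : ∀ t : ℝ, t ≤ (⌈t / τ⌉₊ : ℝ) * τ := by
    intro t
    have := Nat.le_ceil (t / τ)
    calc t = t / τ * τ := by field_simp
    _ ≤ (⌈t / τ⌉₊ : ℝ) * τ := mul_le_mul_of_nonneg_right this hτ.le
  refine ⟨fun t => g ⌈t / τ⌉₊ t, ?_, ?_, ?_, ?_⟩
  · simp only [zero_div, Nat.ceil_zero]
    exact hg0 0
  · intro t ht
    exact hgmem _ t ⟨ht, hle_ceil t⟩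
  · intro b hb
    set n := ⌈b / τ⌉₊ with hn
    have hSn : Sol (g n) 0 b :=
      hrestrict _ 0 ((n:ℝ) * τ) 0 b (hgSol n) le_rfl hb (hle_ceil b)
    refine hlocal_pred (g n) _ 0 b hSn (fun t ht => ?_)
    have hmn : ⌈t / τ⌉₊ ≤ n :=
      Nat.ceil_le_ceil (div_le_div_of_nonneg_right ht.2 hτ.le)
    exact hcons _ n hmn t ⟨ht.1, hle_ceil t⟩
  · intro k' hk'0 hk'Sol t ht
    have hSolk : Sol (fun t => g ⌈t / τ⌉₊ t) 0 t := by
      set n := ⌈t / τ⌉₊ with hn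
      have hSn : Sol (g n) 0 t :=
        hrestrict _ 0 ((n:ℝ) * τ) 0 t (hgSol n) le_rfl ht (hle_ceil t)
      refine hlocal_pred (g n) _ 0 t hSn (fun s hs => ?_)
      have hmn : ⌈s / τ⌉₊ ≤ n :=
        Nat.ceil_le_ceil (div_le_div_of_nonneg_right hs.2 hτ.le)
      exact hcons _ n hmn s ⟨hs.1, hle_ceil s⟩
    have h00 : k' 0 = g ⌈(0:ℝ) / τ⌉₊ 0 := by
      simp only [zero_div, Nat.ceil_zero]
      rw [hk'0, hg0 0]
    exact huniq k' _ 0 t (hk'Sol t ht) hSolk h00 t ⟨ht, le_rfl⟩
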